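/- Let H be a Hopf algebra, A an H-module algebra with adjoint action given by an algebra homomorphism u : H → A, and F ∈ H⊗H a counital 2-cocycle with F⁻¹ = f'⊗f''. Then the map η : A_F → A sending a to (f' ▷ a)·u(f'') is an isomorphism of algebras. -/

import Mathlib

open TensorProduct LinearMap

noncomputable section

variable (k : Type) [Field k]
variable (H : Type) [Ring H] [HopfAlgebra k H]

/-- `F`, with inverse `Finv`, is a counital 2-cocycle on the Hopf algebra `H`:
`(F⊗1)·(Δ⊗id)(F) = (1⊗F)·(id⊗Δ)(F)` and `(ε⊗id)(F) = 1 = (id⊗ε)(F)`. -/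
def IsCocycle (F Finv : H ⊗[k] H) : Prop :=
  F * Finv = 1 ∧ Finv * F = 1 ∧
  (F ⊗ₜ[k] (1 : H)) * (TensorProduct.map Coalgebra.comul LinearMap.id F) =
    (TensorProduct.assoc k H H H).symm
      (((1 : H) ⊗ₜ[k] F) * (TensorProduct.map LinearMap.id Coalgebra.comul F)) ∧
  TensorProduct.map Coalgebra.counit LinearMap.id F = 1 ∧
  TensorProduct.map LinearMap.id Coalgebra.counit F = 1

/-- A (left) module-algebra structure of a Hopf algebra `H` on an algebra `A`:
`A` is an algebra object in the category of `H`-modules. -/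
structure ModuleAlgebra (A : Type) [Ring A] [Algebra k A] where
  act : H →ₗ[k] Module.End k A
  act_one : act 1 = 1
  act_mul : ∀ g h : H, act (g * h) = act g * act h
  act_algebra_unit : ∀ h : H, act h (1 : A) = (Coalgebra.counit h : k) • (1 : A)
  act_algebra_mul : ∀ (h : H) (a b : A),
    act h (a * b) = LinearMap.mul' k A
      ((TensorProduct.homTensorHomMap (RingHom.id k) A A A A
        (TensorProduct.map act act (Coalgebra.comul h))) (a ⊗ₜ[k] b))

variable {k H}

/-- The operator on `A ⊗ B` obtained by letting an element `x ∈ H ⊗ H` act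
legwise through the actions `actA`, `actB`. -/
def legAct {A B : Type} [AddCommGroup A] [Module k A] [AddCommGroup B] [Module k B]
    (actA : H →ₗ[k] Module.End k A) (actB : H →ₗ[k] Module.End k B) (x : H ⊗[k] H) :
    A ⊗[k] B →ₗ[k] A ⊗[k] B :=
  TensorProduct.homTensorHomMap (RingHom.id k) A B A B (TensorProduct.map actA actB x)

/-- The twisted product `m_F = m ∘ (F⁻¹ ▷ −)` on `A`. -/
def twistedMul {A : Type} [Ring A] [Algebra k A] (ma : ModuleAlgebra k H A)
    (Finv : H ⊗[k] H) : A ⊗[k] A →ₗ[k] A :=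
  LinearMap.mul' k A ∘ₗ legAct ma.act ma.act Finv

/-- The twisted coproduct `Δ_F(h) = F·Δ(h)·F⁻¹`. -/
def twistedComul (F Finv : H ⊗[k] H) : H →ₗ[k] H ⊗[k] H :=
  LinearMap.mulLeft k F ∘ₗ LinearMap.mulRight k Finv ∘ₗ Coalgebra.comul


/-- A representation of a `k`-algebra `A` on a `k`-vector space `V`. -/
structure AlgRep (A : Type) [Ring A] [Algebra k A] (V : Type) [AddCommGroup V] [Module k V] where
  ρ : A →ₗ[k] Module.End k V
  ρ_one : ρ 1 = 1
  ρ_mul : ∀ a b : A, ρ (a * b) = ρ a * ρ b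

/-- `V` is an `(H,A)`-module: the `A`-action is a morphism of `H`-modules, i.e.
`h ▷ (a ▷_A v) = (h₍₁₎ ▷ a) ▷_A (h₍₂₎ ▷ v)`. -/
def IsHAModule {A V : Type} [Ring A] [Algebra k A] [AddCommGroup V] [Module k V]
    (ma : ModuleAlgebra k H A) (ρA : AlgRep (k := k) A V) (ρH : AlgRep (k := k) H V) : Prop :=
  ∀ (h : H) (a : A) (v : V),
    ρH.ρ h (ρA.ρ a v) =
      TensorProduct.lift ρA.ρ (legAct ma.act ρH.ρ (Coalgebra.comul h) (a ⊗ₜ[k] v))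

/-- The Giaquinto–Zhang twisted action `▷_F = ▷_A ∘ (F⁻¹ ▷ −)` of `A_F` on `V`. -/
def twistedAct {A V : Type} [Ring A] [Algebra k A] [AddCommGroup V] [Module k V]
    (ma : ModuleAlgebra k H A) (ρA : AlgRep (k := k) A V) (ρH : AlgRep (k := k) H V)
    (Finv : H ⊗[k] H) : A →ₗ[k] Module.End k V :=
  TensorProduct.curry (TensorProduct.lift ρA.ρ ∘ₗ legAct ma.act ρH.ρ Finv)

/-- Generic smash-product multiplication on `A ⊗ H`, for a multiplication `μA` on `A`,
comultiplication `δ` and multiplication `μH` on `H`, and action `actUn : H ⊗ A → A`: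
`(a # h)(b # g) = a·(h₍₁₎ ▷ b) # h₍₂₎·g`. -/
def smashMulMap {A : Type} [AddCommGroup A] [Module k A]
    (μA : A ⊗[k] A →ₗ[k] A) (δ : H →ₗ[k] H ⊗[k] H) (μH : H ⊗[k] H →ₗ[k] H)
    (actUn : H ⊗[k] A →ₗ[k] A) :
    (A ⊗[k] H) ⊗[k] (A ⊗[k] H) →ₗ[k] A ⊗[k] H :=
  TensorProduct.map μA LinearMap.id
    ∘ₗ (TensorProduct.assoc k A A H).symm.toLinearMap
    ∘ₗ (TensorProduct.map LinearMap.id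
          ((TensorProduct.map actUn μH)
            ∘ₗ (TensorProduct.tensorTensorTensorComm k H H A H).toLinearMap))
    ∘ₗ (TensorProduct.assoc k A (H ⊗[k] H) (A ⊗[k] H)).toLinearMap
    ∘ₗ TensorProduct.map (TensorProduct.map LinearMap.id δ) LinearMap.id

/-- The adjoint (strongly inner) action `h ▷ a = u(h₍₁₎)·a·u(S(h₍₂₎))` of `H` on `A`,
along an algebra homomorphism `u : H → A`. -/
def adjointAction {A : Type} [Ring A] [Algebra k A] (u : H →ₐ[k] A) :
    H →ₗ[k] Module.End k A :=
  LinearMap.mul' k (Module.End k A)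
    ∘ₗ TensorProduct.map (LinearMap.mul k A ∘ₗ u.toLinearMap)
        ((LinearMap.mul k A).flip ∘ₗ u.toLinearMap ∘ₗ HopfAlgebra.antipode (R := k))
    ∘ₗ Coalgebra.comul

/-- The Kulish–Mudrov map `η : A_F → A`, `a ↦ (f' ▷ a)·u(f'')` with `F⁻¹ = f' ⊗ f''`. -/
def kulishMudrovEta {A : Type} [Ring A] [Algebra k A] (ma : ModuleAlgebra k H A)
    (u : H →ₐ[k] A) (Finv : H ⊗[k] H) : A →ₗ[k] A :=
  LinearMap.mul' k A
    ∘ₗ TensorProduct.map (TensorProduct.lift ma.act) u.toLinearMap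
    ∘ₗ (TensorProduct.assoc k H A H).symm.toLinearMap
    ∘ₗ TensorProduct.map LinearMap.id (TensorProduct.comm k H A).toLinearMap
    ∘ₗ (TensorProduct.assoc k H H A).toLinearMap
    ∘ₗ TensorProduct.mk k (H ⊗[k] H) A Finv

/-!
For the adjoint action, `η` is the sandwich operator `a ↦ Σ u(x) a u(y)` of the element
`T = f'₁ ⊗ S(f'₂) f''` of `H ⊗ Hᵐᵒᵖ`. Contracting the cocycle identity for `F⁻¹` by
`x ⊗ y ⊗ z ↦ x ⊗ S(y) z` gives `T = (1 ⊗ v) · (id ⊗ S)(F)` with `v = S(f') f''`. Two further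
contractions of the cocycle identities show that `v` is invertible with inverse `w = f¹ S(f²)`,
where `F = f¹ ⊗ f²`. Hence `T`, and with it `η`, is invertible.

Both `η(a ·_F b)` and `η(a) η(b)` are the value of `x ⊗ y ⊗ z ↦ (x ▷ a)(y ▷ b) u(z)` on one side
of the cocycle identity for `F⁻¹`; for `η(a) η(b)` this uses `u(h) c = (h₁ ▷ c) u(h₂)`.
Finally `η(1) = u((ε ⊗ id) F⁻¹) = 1`.
-/

open Coalgebra Bialgebra HopfAlgebra

namespace Bialgebra

variable {R B : Type*} [CommSemiring R] [Semiring B] [Bialgebra R B]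

def counitLeft : B ⊗[R] B →ₐ[R] B :=
  (Algebra.TensorProduct.lid R B).toAlgHom.comp
    (Algebra.TensorProduct.map (counitAlgHom R B) (AlgHom.id R B))

def counitRight : B ⊗[R] B →ₐ[R] B :=
  (Algebra.TensorProduct.rid R R B).toAlgHom.comp
    (Algebra.TensorProduct.map (AlgHom.id R B) (counitAlgHom R B))

@[simp] lemma counitLeft_tmul (x y : B) : counitLeft (x ⊗ₜ[R] y) = counit (R := R) x • y := by
  simp [counitLeft]

@[simp] lemma counitRight_tmul (x y : B) : counitRight (x ⊗ₜ[R] y) = counit (R := R) y • x := by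
  simp [counitRight]

lemma counitLeft_eq_lid (X : B ⊗[R] B) :
    counitLeft X = _root_.TensorProduct.lid R B (_root_.TensorProduct.map counit LinearMap.id X) :=
  rfl

lemma counitRight_eq_rid (X : B ⊗[R] B) :
    counitRight X = _root_.TensorProduct.rid R B (_root_.TensorProduct.map LinearMap.id counit X) :=
  rfl

lemma counitRight_comul (x : B) : counitRight (comul (R := R) x) = x := by
  rw [counitRight_eq_rid, ← LinearMap.lTensor_def, lTensor_counit_comul,
    _root_.TensorProduct.rid_tmul, one_smul]

end Bialgebra

namespace HopfAlgebra

variable {R B : Type*} [CommSemiring R] [Semiring B] [HopfAlgebra R B]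

def antipodeMul : B ⊗[R] B →ₗ[R] B := LinearMap.mul' R B ∘ₗ (antipode R).rTensor B

def mulAntipode : B ⊗[R] B →ₗ[R] B := LinearMap.mul' R B ∘ₗ (antipode R).lTensor B

@[simp] lemma antipodeMul_tmul (x y : B) : antipodeMul (x ⊗ₜ[R] y) = antipode R x * y := by
  simp [antipodeMul]

@[simp] lemma mulAntipode_tmul (x y : B) : mulAntipode (x ⊗ₜ[R] y) = x * antipode R y := by
  simp [mulAntipode]

lemma antipodeMul_comul (x : B) : antipodeMul (comul (R := R) x) = algebraMap R B (counit x) :=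
  mul_antipode_rTensor_comul_apply x

lemma mulAntipode_comul (x : B) : mulAntipode (comul (R := R) x) = algebraMap R B (counit x) :=
  mul_antipode_lTensor_comul_apply x

lemma antipodeMul_mul_tmul (W : B ⊗[R] B) (p q : B) :
    antipodeMul (W * (p ⊗ₜ[R] q)) = antipode R p * antipodeMul W * q := by
  induction W using TensorProduct.induction_on with
  | zero => simp
  | add W W' hW hW' => simp [add_mul, hW, hW', mul_add]
  | tmul x y => simp [antipode_mul_antidistrib, mul_assoc]

lemma antipodeMul_comul_mul (x : B) (Y : B ⊗[R] B) :
    antipodeMul (comul (R := R) x * Y) = counit (R := R) x • antipodeMul Y := by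
  induction Y using TensorProduct.induction_on with
  | zero => simp
  | add Y Y' hY hY' => simp [mul_add, hY, hY']
  | tmul p q =>
    rw [antipodeMul_mul_tmul, antipodeMul_comul, ← Algebra.commutes, mul_assoc,
      ← Algebra.smul_def, antipodeMul_tmul]

lemma mulAntipode_tmul_mul (p q : B) (W : B ⊗[R] B) :
    mulAntipode ((p ⊗ₜ[R] q) * W) = p * mulAntipode W * antipode R q := by
  induction W using TensorProduct.induction_on with
  | zero => simp
  | add W W' hW hW' => simp [mul_add, hW, hW', add_mul]
  | tmul x y => simp [antipode_mul_antidistrib, mul_assoc]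

lemma mulAntipode_mul_comul (X : B ⊗[R] B) (y : B) :
    mulAntipode (X * comul (R := R) y) = counit (R := R) y • mulAntipode X := by
  induction X using TensorProduct.induction_on with
  | zero => simp
  | add X X' hX hX' => simp [add_mul, hX, hX']
  | tmul p q =>
    rw [mulAntipode_tmul_mul, mulAntipode_comul, ← Algebra.commutes, mul_assoc,
      ← Algebra.smul_def, mulAntipode_tmul]

def antipodeOpRight : B ⊗[R] B →ₐ[R] B ⊗[R] Bᵐᵒᵖ :=
  Algebra.TensorProduct.map (AlgHom.id R B) (antipodeAlgHomOp R B)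

@[simp] lemma antipodeOpRight_tmul (x y : B) :
    antipodeOpRight (x ⊗ₜ[R] y) = x ⊗ₜ MulOpposite.op (antipode R y) := rfl

def contractOp : (B ⊗[R] B) ⊗[R] B →ₗ[R] B ⊗[R] Bᵐᵒᵖ :=
  ((MulOpposite.opLinearEquiv R).toLinearMap ∘ₗ antipodeMul).lTensor B
    ∘ₗ (TensorProduct.assoc R B B B).toLinearMap

@[simp] lemma contractOp_tmul (x y z : B) :
    contractOp ((x ⊗ₜ[R] y) ⊗ₜ[R] z) = x ⊗ₜ MulOpposite.op (antipode R y * z) := by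
  simp [contractOp]

lemma contractOp_mul_tmul_one (M : (B ⊗[R] B) ⊗[R] B) (Z : B ⊗[R] B) :
    contractOp (M * (Z ⊗ₜ 1)) = contractOp M * antipodeOpRight Z := by
  induction Z using TensorProduct.induction_on with
  | zero => simp
  | add Z Z' hZ hZ' => simp [TensorProduct.add_tmul, mul_add, hZ, hZ']
  | tmul p q =>
    suffices contractOp ∘ₗ LinearMap.mulRight R ((p ⊗ₜ[R] q) ⊗ₜ[R] (1 : B)) =
        LinearMap.mulRight R (antipodeOpRight (p ⊗ₜ[R] q)) ∘ₗ contractOp from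
      congr($this M)
    refine TensorProduct.ext_threefold fun x y z => ?_
    simp [antipode_mul_antidistrib, mul_assoc]

lemma contractOp_assoc_symm (Z Z' : B ⊗[R] B) :
    contractOp ((TensorProduct.assoc R B B B).symm
        (TensorProduct.map LinearMap.id comul Z * (1 ⊗ₜ Z'))) =
      counitRight Z ⊗ₜ MulOpposite.op (antipodeMul Z') := by
  induction Z using TensorProduct.induction_on with
  | zero => simp
  | add Z Z'' hZ hZ'' => simp [add_mul, TensorProduct.add_tmul, hZ, hZ'']
  | tmul x y =>
    simp [contractOp, antipodeMul_comul_mul, TensorProduct.smul_tmul]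

lemma contractOp_comul_tmul (x y : B) :
    contractOp (TensorProduct.map comul LinearMap.id (x ⊗ₜ[R] y)) =
      (1 ⊗ₜ MulOpposite.op y) * antipodeOpRight (comul (R := R) x) := by
  rw [TensorProduct.map_tmul, LinearMap.id_apply]
  induction comul (R := R) x using TensorProduct.induction_on with
  | zero => simp
  | add W W' hW hW' => simp [TensorProduct.add_tmul, mul_add, hW, hW']
  | tmul p q => simp

lemma contractOp_comul_comul (x : B) :
    contractOp (TensorProduct.map comul LinearMap.id (comul (R := R) x)) = x ⊗ₜ 1 := by
  have h := contractOp_assoc_symm (R := R) (comul x) 1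
  rwa [← Algebra.TensorProduct.one_def, mul_one, ← LinearMap.lTensor_def, coassoc_symm_apply,
    counitRight_comul, Algebra.TensorProduct.one_def, antipodeMul_tmul, antipode_one, mul_one,
    MulOpposite.op_one] at h

def mulUnop : B ⊗[R] Bᵐᵒᵖ →ₗ[R] B :=
  LinearMap.mul' R B ∘ₗ (MulOpposite.opLinearEquiv R).symm.toLinearMap.lTensor B

@[simp] lemma mulUnop_tmul (x : B) (y : Bᵐᵒᵖ) : mulUnop (x ⊗ₜ[R] y) = x * y.unop := by
  simp [mulUnop]

lemma mulUnop_one_tmul_mul_antipodeOpRight (c : B) (Z : B ⊗[R] B) :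
    mulUnop ((1 ⊗ₜ MulOpposite.op c) * antipodeOpRight Z) = mulAntipode Z * c := by
  induction Z using TensorProduct.induction_on with
  | zero => simp
  | add Z Z' hZ hZ' => simp [mul_add, add_mul, hZ, hZ']
  | tmul x y => simp [mul_assoc]

lemma mulUnop_contractOp_map_comul (Z : B ⊗[R] B) :
    mulUnop (contractOp (TensorProduct.map comul LinearMap.id Z)) = counitLeft Z := by
  induction Z using TensorProduct.induction_on with
  | zero => simp
  | add Z Z' hZ hZ' => simp [hZ, hZ']
  | tmul x y =>
    rw [contractOp_comul_tmul, mulUnop_one_tmul_mul_antipodeOpRight, mulAntipode_comul,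
      counitLeft_tmul, Algebra.smul_def]

def antipodeMulAntipode : (B ⊗[R] B) ⊗[R] B →ₗ[R] B :=
  LinearMap.mul' R B ∘ₗ TensorProduct.map antipodeMul (antipode R)

@[simp] lemma antipodeMulAntipode_tmul (x y z : B) :
    antipodeMulAntipode ((x ⊗ₜ[R] y) ⊗ₜ[R] z) = antipode R x * y * antipode R z := by
  simp [antipodeMulAntipode]

lemma antipodeMulAntipode_map_comul (Z : B ⊗[R] B) :
    antipodeMulAntipode (TensorProduct.map comul LinearMap.id Z) = antipode R (counitLeft Z) := by
  induction Z using TensorProduct.induction_on with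
  | zero => simp
  | add Z Z' hZ hZ' => simp [hZ, hZ']
  | tmul x y =>
    simp [antipodeMulAntipode, antipodeMul_comul, ← Algebra.smul_def]

lemma antipodeMulAntipode_tmul_one_mul_assoc_symm (Z N : B ⊗[R] B) (r : B) :
    antipodeMulAntipode ((Z ⊗ₜ 1) * (TensorProduct.assoc R B B B).symm (r ⊗ₜ N)) =
      antipode R r * antipodeMul Z * mulAntipode N := by
  induction Z using TensorProduct.induction_on with
  | zero => simp
  | add Z Z' hZ hZ' => simp [TensorProduct.add_tmul, add_mul, mul_add, hZ, hZ']
  | tmul x y =>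
    induction N using TensorProduct.induction_on with
    | zero => simp
    | add N N' hN hN' => simp [TensorProduct.tmul_add, mul_add, hN, hN']
    | tmul p q => simp [antipode_mul_antidistrib, mul_assoc]

lemma antipodeMulAntipode_tmul_one_mul_cocycle (Z Z' Z'' : B ⊗[R] B) :
    antipodeMulAntipode ((Z ⊗ₜ 1) * (TensorProduct.assoc R B B B).symm
        ((1 ⊗ₜ Z') * TensorProduct.map LinearMap.id comul Z'')) =
      antipode R (counitRight Z'') * antipodeMul Z * mulAntipode Z' := by
  induction Z'' using TensorProduct.induction_on with
  | zero => simp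
  | add Z'' Z''' h h' => simp [mul_add, add_mul, h, h']
  | tmul r s =>
    simp [antipodeMulAntipode_tmul_one_mul_assoc_symm, mulAntipode_mul_comul]

end HopfAlgebra

section Sandwich

variable {R B A : Type*} [CommSemiring R] [Semiring B] [Algebra R B] [Semiring A] [Algebra R A]

def AlgHom.sandwich (u : B →ₐ[R] A) : B ⊗[R] Bᵐᵒᵖ →ₐ[R] Module.End R A :=
  Algebra.TensorProduct.lift ((Algebra.lmul R A).comp u) ((Algebra.lsmul R R A).comp (AlgHom.op u))
    fun x y => LinearMap.ext fun a => (mul_assoc (u x) a (u y.unop)).symm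

@[simp] lemma AlgHom.sandwich_tmul (u : B →ₐ[R] A) (x : B) (y : Bᵐᵒᵖ) (a : A) :
    u.sandwich (x ⊗ₜ y) a = u x * a * u y.unop :=
  (mul_assoc _ _ _).symm

end Sandwich

lemma map_inv_mul_map_inv_eq {M N : Type*} [Monoid M] [Monoid N] (φ₁ φ₂ φ₃ φ₄ : M →* N)
    {x y : M} (hxy : x * y = 1) (hyx : y * x = 1) (h : φ₁ x * φ₂ x = φ₃ x * φ₄ x) :
    φ₂ y * φ₁ y = φ₄ y * φ₃ y := by
  let xu : Mˣ := ⟨x, y, hxy, hyx⟩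
  have hu : Units.map φ₁ xu * Units.map φ₂ xu = Units.map φ₃ xu * Units.map φ₄ xu := Units.ext h
  simpa [mul_inv_rev, xu] using congrArg (fun v : Nˣ => ((v⁻¹ : Nˣ) : N)) hu

namespace IsCocycle

variable {F Finv : H ⊗[k] H}

lemma counitLeft_eq_one (hF : IsCocycle k H F Finv) : counitLeft F = 1 := by
  rw [counitLeft_eq_lid, hF.2.2.2.1, Algebra.TensorProduct.one_def, TensorProduct.lid_tmul,
    one_smul]

lemma counitRight_eq_one (hF : IsCocycle k H F Finv) : counitRight F = 1 := by
  rw [counitRight_eq_rid, hF.2.2.2.2, Algebra.TensorProduct.one_def, TensorProduct.rid_tmul,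
    one_smul]

lemma counitLeft_inv_eq_one (hF : IsCocycle k H F Finv) : counitLeft Finv = 1 := by
  calc counitLeft Finv = counitLeft Finv * counitLeft F := by rw [hF.counitLeft_eq_one, mul_one]
    _ = 1 := by rw [← map_mul, hF.2.1, map_one]

lemma counitRight_inv_eq_one (hF : IsCocycle k H F Finv) : counitRight Finv = 1 := by
  calc counitRight Finv = counitRight Finv * counitRight F := by
        rw [hF.counitRight_eq_one, mul_one]
    _ = 1 := by rw [← map_mul, hF.2.1, map_one]

lemma inv_cocycle (hF : IsCocycle k H F Finv) :
    TensorProduct.map comul LinearMap.id Finv * (Finv ⊗ₜ 1) =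
      (TensorProduct.assoc k H H H).symm
        (TensorProduct.map LinearMap.id comul Finv * (1 ⊗ₜ Finv)) := by
  let assocAlg := Algebra.TensorProduct.assoc k k k H H H
  have h : TensorProduct.map comul LinearMap.id Finv * (Finv ⊗ₜ 1) =
      assocAlg.symm (TensorProduct.map LinearMap.id comul Finv) * assocAlg.symm (1 ⊗ₜ Finv) :=
    map_inv_mul_map_inv_eq
      (Algebra.TensorProduct.includeLeft : H ⊗[k] H →ₐ[k] (H ⊗[k] H) ⊗[k] H).toMonoidHom
      (Algebra.TensorProduct.map (Bialgebra.comulAlgHom k H) (AlgHom.id k H)).toMonoidHom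
      (assocAlg.symm.toAlgHom.comp Algebra.TensorProduct.includeRight).toMonoidHom
      (assocAlg.symm.toAlgHom.comp
        (Algebra.TensorProduct.map (AlgHom.id k H) (Bialgebra.comulAlgHom k H))).toMonoidHom
      hF.1 hF.2.1 (by
        show F ⊗ₜ 1 * TensorProduct.map comul LinearMap.id F =
          assocAlg.symm (1 ⊗ₜ F) * assocAlg.symm (TensorProduct.map LinearMap.id comul F)
        rw [← map_mul]
        exact hF.2.2.1)
  rw [← map_mul] at h
  exact h

lemma contractOp_inv (hF : IsCocycle k H F Finv) :
    contractOp (TensorProduct.map comul LinearMap.id Finv) =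
      (1 ⊗ₜ MulOpposite.op (antipodeMul Finv)) * antipodeOpRight F := by
  have h := congr(contractOp $(hF.inv_cocycle))
  rw [contractOp_mul_tmul_one, contractOp_assoc_symm, hF.counitRight_inv_eq_one] at h
  calc contractOp (TensorProduct.map comul LinearMap.id Finv)
      = contractOp (TensorProduct.map comul LinearMap.id Finv) * antipodeOpRight (Finv * F) := by
        rw [hF.2.1, map_one, mul_one]
    _ = _ := by rw [map_mul, ← mul_assoc, h]

lemma mulAntipode_mul_antipodeMul (hF : IsCocycle k H F Finv) :
    mulAntipode F * antipodeMul Finv = 1 := by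
  have h := congr(mulUnop $(hF.contractOp_inv))
  rwa [mulUnop_contractOp_map_comul, hF.counitLeft_inv_eq_one,
    mulUnop_one_tmul_mul_antipodeOpRight, eq_comm] at h

lemma antipodeMul_mul_mulAntipode (hF : IsCocycle k H F Finv) :
    antipodeMul Finv * mulAntipode F = 1 := by
  have h : TensorProduct.map comul LinearMap.id F = (Finv ⊗ₜ 1) *
      (TensorProduct.assoc k H H H).symm ((1 ⊗ₜ F) * TensorProduct.map LinearMap.id comul F) := by
    rw [← hF.2.2.1, ← mul_assoc, Algebra.TensorProduct.tmul_mul_tmul, hF.2.1, one_mul,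
      ← Algebra.TensorProduct.one_def, one_mul]
  have h' := congr(antipodeMulAntipode $h)
  rwa [antipodeMulAntipode_map_comul, antipodeMulAntipode_tmul_one_mul_cocycle,
    hF.counitLeft_eq_one, hF.counitRight_eq_one, antipode_one, one_mul, eq_comm] at h'

lemma isUnit_contractOp_inv (hF : IsCocycle k H F Finv) :
    IsUnit (contractOp (TensorProduct.map comul LinearMap.id Finv)) := by
  have hv : IsUnit (antipodeMul Finv) :=
    ⟨⟨_, _, hF.antipodeMul_mul_mulAntipode, hF.mulAntipode_mul_antipodeMul⟩, rfl⟩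
  have hF' : IsUnit F := ⟨⟨F, Finv, hF.1, hF.2.1⟩, rfl⟩
  rw [hF.contractOp_inv]
  exact (hv.op.map Algebra.TensorProduct.includeRight).mul (hF'.map antipodeOpRight)

end IsCocycle

section ModuleAlgebra

variable {A : Type} [Ring A] [Algebra k A]

lemma adjointAction_eq_sandwich (u : H →ₐ[k] A) (h : H) :
    adjointAction u h = u.sandwich (antipodeOpRight (comul (R := k) h)) := by
  simp only [adjointAction, LinearMap.comp_apply]
  induction comul (R := k) h using TensorProduct.induction_on with
  | zero => simp
  | add W W' hW hW' => simp [hW, hW']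
  | tmul x y => ext a; simp [mul_assoc]

variable (ma : ModuleAlgebra k H A) (u : H →ₐ[k] A)

lemma kulishMudrovEta_apply (Z : H ⊗[k] H) (c : A) :
    kulishMudrovEta ma u Z c =
      LinearMap.mul' k A (TensorProduct.map (ma.act.flip c) u.toLinearMap Z) := by
  induction Z using TensorProduct.induction_on with
  | zero => simp [kulishMudrovEta]
  | add Z Z' hZ hZ' => simp_all [kulishMudrovEta]
  | tmul x y => simp [kulishMudrovEta]

@[simp] lemma kulishMudrovEta_zero : kulishMudrovEta ma u 0 = 0 := by
  ext c
  simp [kulishMudrovEta_apply]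

@[simp] lemma kulishMudrovEta_add (Z Z' : H ⊗[k] H) :
    kulishMudrovEta ma u (Z + Z') = kulishMudrovEta ma u Z + kulishMudrovEta ma u Z' := by
  ext c
  simp [kulishMudrovEta_apply]

@[simp] lemma kulishMudrovEta_tmul (x y : H) (c : A) :
    kulishMudrovEta ma u (x ⊗ₜ y) c = ma.act x c * u y := by
  simp [kulishMudrovEta_apply]

lemma kulishMudrovEta_one (Z : H ⊗[k] H) : kulishMudrovEta ma u Z 1 = u (counitLeft Z) := by
  induction Z using TensorProduct.induction_on with
  | zero => simp
  | add Z Z' hZ hZ' => simp [hZ, hZ']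
  | tmul x y => simp [ma.act_algebra_unit]

variable {ma u}

lemma kulishMudrovEta_eq_sandwich (hadj : ma.act = adjointAction u) (Z : H ⊗[k] H) :
    kulishMudrovEta ma u Z = u.sandwich (contractOp (TensorProduct.map comul LinearMap.id Z)) := by
  ext c
  induction Z using TensorProduct.induction_on with
  | zero => simp
  | add Z Z' hZ hZ' => simp [hZ, hZ']
  | tmul x y =>
    rw [contractOp_comul_tmul, map_mul, Module.End.mul_apply, ← adjointAction_eq_sandwich, ← hadj]
    simp

lemma kulishMudrovEta_comul (hadj : ma.act = adjointAction u) (y : H) (c : A) :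
    kulishMudrovEta ma u (comul (R := k) y) c = u y * c := by
  simp [kulishMudrovEta_eq_sandwich hadj, contractOp_comul_comul]

variable (ma u) in
def actMulActMul (a b : A) : (H ⊗[k] H) ⊗[k] H →ₗ[k] A :=
  LinearMap.mul' k A ∘ₗ (LinearMap.mul' k A).rTensor A
    ∘ₗ TensorProduct.map (TensorProduct.map (ma.act.flip a) (ma.act.flip b)) u.toLinearMap

@[simp] lemma actMulActMul_tmul (a b : A) (x y z : H) :
    actMulActMul ma u a b ((x ⊗ₜ y) ⊗ₜ z) = ma.act x a * ma.act y b * u z := by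
  simp [actMulActMul]

lemma ModuleAlgebra.act_apply_mul (x : H) (c d : A) :
    ma.act x (c * d) =
      LinearMap.mul' k A (TensorProduct.map (ma.act.flip c) (ma.act.flip d) (comul (R := k) x)) := by
  rw [ma.act_algebra_mul]
  induction comul (R := k) x using TensorProduct.induction_on with
  | zero => simp
  | add W W' hW hW' => simp_all
  | tmul r s => simp

lemma twistedMul_tmul_apply (Z : H ⊗[k] H) (a b : A) :
    twistedMul ma Z (a ⊗ₜ b) =
      LinearMap.mul' k A (TensorProduct.map (ma.act.flip a) (ma.act.flip b) Z) := by
  induction Z using TensorProduct.induction_on with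
  | zero => simp [twistedMul, legAct]
  | add Z Z' hZ hZ' => simp_all [twistedMul, legAct]
  | tmul p q => simp [twistedMul, legAct]

lemma kulishMudrovEta_twistedMul (Z Z' : H ⊗[k] H) (a b : A) :
    kulishMudrovEta ma u Z (twistedMul ma Z' (a ⊗ₜ b)) =
      actMulActMul ma u a b (TensorProduct.map comul LinearMap.id Z * (Z' ⊗ₜ 1)) := by
  induction Z using TensorProduct.induction_on with
  | zero => simp
  | add Z₁ Z₂ h₁ h₂ => simp [add_mul, h₁, h₂]
  | tmul x y =>
    rw [kulishMudrovEta_tmul, twistedMul_tmul_apply, TensorProduct.map_tmul, LinearMap.id_apply]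
    induction Z' using TensorProduct.induction_on with
    | zero => simp
    | add Z₁ Z₂ h₁ h₂ => simp [mul_add, add_mul, TensorProduct.add_tmul, h₁, h₂]
    | tmul p q =>
      simp only [TensorProduct.map_tmul, LinearMap.mul'_apply, LinearMap.flip_apply,
        ModuleAlgebra.act_apply_mul, Algebra.TensorProduct.tmul_mul_tmul, mul_one]
      induction comul (R := k) x using TensorProduct.induction_on with
      | zero => simp
      | add W W' hW hW' => simp [add_mul, TensorProduct.add_tmul, hW, hW']
      | tmul r s => simp [ma.act_mul, Module.End.mul_apply]

lemma kulishMudrovEta_mul (hadj : ma.act = adjointAction u) (Z Z' : H ⊗[k] H) (a b : A) :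
    kulishMudrovEta ma u Z a * kulishMudrovEta ma u Z' b =
      actMulActMul ma u a b ((TensorProduct.assoc k H H H).symm
        (TensorProduct.map LinearMap.id comul Z * (1 ⊗ₜ Z'))) := by
  induction Z using TensorProduct.induction_on with
  | zero => simp
  | add Z₁ Z₂ h₁ h₂ => simp [add_mul, h₁, h₂]
  | tmul x y =>
    induction Z' using TensorProduct.induction_on with
    | zero => simp
    | add Z₁ Z₂ h₁ h₂ =>
      simp only [kulishMudrovEta_add, LinearMap.add_apply, mul_add, TensorProduct.tmul_add, map_add,
        h₁, h₂]
    | tmul p q =>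
      have key : ∀ W : H ⊗[k] H, actMulActMul ma u a b
          ((TensorProduct.assoc k H H H).symm (x ⊗ₜ (W * (p ⊗ₜ q)))) =
          ma.act x a * kulishMudrovEta ma u W (ma.act p b) * u q := by
        intro W
        induction W using TensorProduct.induction_on with
        | zero => simp
        | add W W' hW hW' => simp [add_mul, mul_add, TensorProduct.tmul_add, hW, hW']
        | tmul r s => simp [ma.act_mul, Module.End.mul_apply, mul_assoc]
      simp only [TensorProduct.map_tmul, LinearMap.id_apply, Algebra.TensorProduct.tmul_mul_tmul,
        mul_one, key, kulishMudrovEta_comul hadj, kulishMudrovEta_tmul, mul_assoc]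

end ModuleAlgebra

theorem twist_iso_of_adjoint {A : Type} [Ring A] [Algebra k A]
    (ma : ModuleAlgebra k H A) (u : H →ₐ[k] A) (hadj : ma.act = adjointAction u)
    (F Finv : H ⊗[k] H) (hF : IsCocycle k H F Finv) :
    Function.Bijective (kulishMudrovEta ma u Finv) ∧
    (∀ a b : A,
      kulishMudrovEta ma u Finv (twistedMul ma Finv (a ⊗ₜ[k] b)) =
        kulishMudrovEta ma u Finv a * kulishMudrovEta ma u Finv b) ∧
    kulishMudrovEta ma u Finv (1 : A) = 1 := by
  refine ⟨?_, fun a b => ?_, ?_⟩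
  · rw [kulishMudrovEta_eq_sandwich hadj, ← Module.End.isUnit_iff]
    exact hF.isUnit_contractOp_inv.map u.sandwich
  · rw [kulishMudrovEta_twistedMul, kulishMudrovEta_mul hadj, hF.inv_cocycle]
  · rw [kulishMudrovEta_one, hF.counitLeft_inv_eq_one, map_one]

end
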